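/- For every integer N ≥ 1, every n with 1 ≤ n ≤ N, and every real t, the (N+1)×(N+1) complex matrix V_n(t) is unitary, i.e. V_n(t)ᴴ·V_n(t) = I. -/

import Mathlib

noncomputable def gf (E ε η t : ℝ) : ℂ :=
  Complex.exp (Complex.I * t * (E - ε) / 2)

noncomputable def wf (E ε η t : ℝ) : ℂ :=
  (2 * Complex.I * η / Real.sqrt ((E - ε) ^ 2 + 4 * η ^ 2)) *
    Real.sin (t * Real.sqrt ((E - ε) ^ 2 / 4 + η ^ 2))

noncomputable def zf (E ε η t : ℝ) : ℂ :=
  (Real.cos (t * Real.sqrt ((E - ε) ^ 2 / 4 + η ^ 2)) : ℂ) +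
    (Complex.I * (E - ε) / Real.sqrt ((E - ε) ^ 2 + 4 * η ^ 2)) *
      Real.sin (t * Real.sqrt ((E - ε) ^ 2 / 4 + η ^ 2))

noncomputable def Vmat (E ε η : ℝ) (N n : ℕ) (t : ℝ) :
    Matrix (Fin (N + 1)) (Fin (N + 1)) ℂ :=
  fun j k =>
    if j.val = 0 then
      gf E ε η t * zf E ε η t * (if k.val = 0 then 1 else 0) +
        gf E ε η t * wf E ε η t * (if k.val = n then 1 else 0)
    else if j.val = n then
      gf E ε η t * wf E ε η t * (if k.val = 0 then 1 else 0) +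
        gf E ε η t * zf E ε η (-t) * (if k.val = n then 1 else 0)
    else if j = k then 1 else 0


/-!
`V_n(t)` is the identity outside the coordinate plane spanned by `e₀` and `eₙ`, and on that plane
it is the phase `g` times `[[z, w], [-w̄, z̄]]`: `w` is purely imaginary, so `-w̄ = w`, and
`z(-t) = z̄(t)`. Such a matrix is unitary because `|g| = 1` and `|z|² + |w|² = 1`, the latter
being `cos² + sin² = 1` once the common denominator `(E - ε)² + 4η²` is cleared.
-/

open Matrix

theorem Matrix.mem_unitaryGroup_of_submatrix_pair {ι R : Type*} [Fintype ι] [DecidableEq ι]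
    [CommRing R] [StarRing R] {A : Matrix ι ι R} {a b : ι} (hab : a ≠ b)
    (hoff : ∀ j k, (j ≠ a ∧ j ≠ b) ∨ (k ≠ a ∧ k ≠ b) → A j k = (1 : Matrix ι ι R) j k)
    (hblock : A.submatrix ![a, b] ![a, b] ∈ unitaryGroup (Fin 2) R) :
    A ∈ unitaryGroup ι R := by
  rw [mem_unitaryGroup_iff'] at hblock ⊢
  ext j k
  simp only [star_eq_conjTranspose, mul_apply, conjTranspose_apply]
  by_cases hj : j ≠ a ∧ j ≠ b
  · rw [Fintype.sum_eq_single j fun m hm => by simp [hoff m j (.inr hj), hm],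
      hoff j j (.inl hj), hoff j k (.inl hj)]
    simp
  by_cases hk : k ≠ a ∧ k ≠ b
  · rw [Fintype.sum_eq_single k fun m hm => by simp [hoff m k (.inr hk), hm],
      hoff k k (.inl hk), hoff k j (.inl hk)]
    have hjk : j ≠ k := fun h => hj (h ▸ hk)
    simp [one_apply_ne hjk, one_apply_ne hjk.symm]
  have hrange : ∀ x, ¬(x ≠ a ∧ x ≠ b) → ∃ i, ![a, b] i = x := fun x hx => by
    by_cases h : x = a
    · exact ⟨0, h.symm⟩
    · exact ⟨1, by simp_all⟩
  obtain ⟨i, rfl⟩ := hrange j hj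
  obtain ⟨i', rfl⟩ := hrange k hk
  have he : Function.Injective ![a, b] := by
    intro p q; fin_cases p <;> fin_cases q <;> simp [hab, hab.symm]
  have hone : (1 : Matrix ι ι R) (![a, b] i) (![a, b] i') = (1 : Matrix (Fin 2) (Fin 2) R) i i' :=
    congrFun (congrFun (submatrix_one _ he) i) i'
  rw [Fintype.sum_eq_add a b hab fun m hm => by
      rw [hoff m _ (.inl hm), one_apply_ne fun h => hj (by rwa [← h])]; simp, hone]
  have hentry := congrFun (congrFun hblock i) i'
  simp only [star_eq_conjTranspose, mul_apply, Fin.sum_univ_two, conjTranspose_apply,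
    submatrix_apply] at hentry
  simpa using hentry

theorem Matrix.smul_mem_unitaryGroup_fin_two {R : Type*} [CommRing R] [StarRing R] {g z w : R}
    (hg : star g * g = 1) (hzw : star z * z + star w * w = 1) :
    g • !![z, w; -star w, star z] ∈ unitaryGroup (Fin 2) R := by
  rw [mem_unitaryGroup_iff', star_smul, smul_mul_smul_comm, hg, one_smul]
  ext i j
  fin_cases i <;> fin_cases j <;> simp [mul_apply, Fin.sum_univ_two] <;>
    first | linear_combination hzw | ring

section Parameters

variable (E ε η : ℝ)

theorem star_gf_mul_gf (t : ℝ) : star (gf E ε η t) * gf E ε η t = 1 := by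
  rw [Complex.star_def, Complex.conj_mul', gf, Complex.norm_exp]
  simp

theorem star_wf (t : ℝ) : star (wf E ε η t) = -wf E ε η t := by
  simp only [wf, Complex.star_def, map_mul, map_div₀, Complex.conj_I, Complex.conj_ofReal, map_ofNat]
  ring

theorem zf_neg (t : ℝ) : zf E ε η (-t) = star (zf E ε η t) := by
  simp only [zf, neg_mul, Real.cos_neg, Real.sin_neg, Complex.ofReal_neg, Complex.star_def,
    map_add, map_mul, map_div₀, map_sub, Complex.conj_I, Complex.conj_ofReal]
  ring

theorem star_zf_mul_zf_add_star_wf_mul_wf (hη : 0 < η) (t : ℝ) :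
    star (zf E ε η t) * zf E ε η t + star (wf E ε η t) * wf E ε η t = 1 := by
  rw [← zf_neg, star_wf]
  simp only [zf, wf, neg_mul, Real.cos_neg, Real.sin_neg, Complex.ofReal_neg]
  set s := Real.sqrt ((E - ε) ^ 2 + 4 * η ^ 2)
  set θ := t * Real.sqrt ((E - ε) ^ 2 / 4 + η ^ 2)
  have hs : (s : ℂ) ^ 2 = (E - ε) ^ 2 + 4 * η ^ 2 := by
    rw [← Complex.ofReal_pow, Real.sq_sqrt (by positivity)]; push_cast; ring
  have hs0 : (s : ℂ) ≠ 0 := Complex.ofReal_ne_zero.mpr (Real.sqrt_pos.mpr (by positivity)).ne'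
  have hθ : (Real.cos θ : ℂ) ^ 2 + (Real.sin θ : ℂ) ^ 2 = 1 := by
    exact_mod_cast Real.cos_sq_add_sin_sq θ
  clear_value s θ
  field_simp
  linear_combination (Real.cos θ ^ 2 - 1 : ℂ) * hs + ((E - ε) ^ 2 + 4 * η ^ 2) * hθ
    - ((E - ε) ^ 2 + 4 * η ^ 2) * (Real.sin θ : ℂ) ^ 2 * Complex.I_sq

theorem Vmat_submatrix {N n : ℕ} (hn0 : n ≠ 0) (hn : n < N + 1) (t : ℝ) :
    (Vmat E ε η N n t).submatrix ![0, ⟨n, hn⟩] ![0, ⟨n, hn⟩] =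
      gf E ε η t • !![zf E ε η t, wf E ε η t; -star (wf E ε η t), star (zf E ε η t)] := by
  ext i j
  fin_cases i <;> fin_cases j <;> simp [Vmat, hn0, hn0.symm, star_wf, ← zf_neg]

theorem Vmat_apply_eq_one_apply {N n : ℕ} (t : ℝ) {j k : Fin (N + 1)}
    (h : (j.val ≠ 0 ∧ j.val ≠ n) ∨ (k.val ≠ 0 ∧ k.val ≠ n)) :
    Vmat E ε η N n t j k = (1 : Matrix (Fin (N + 1)) (Fin (N + 1)) ℂ) j k := by
  simp only [Vmat, one_apply]
  split_ifs <;> simp_all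

end Parameters

theorem stmt19_general (E ε η : ℝ) (hη : 0 < η) (N n : ℕ)
    (hn1 : 1 ≤ n) (hnN : n ≤ N) (t : ℝ) :
    (Vmat E ε η N n t).conjTranspose * Vmat E ε η N n t = 1 := by
  have hn : n < N + 1 := by omega
  have hn0 : n ≠ 0 := by omega
  rw [← star_eq_conjTranspose, ← mem_unitaryGroup_iff']
  refine mem_unitaryGroup_of_submatrix_pair (a := 0) (b := ⟨n, hn⟩)
    (by simp [Fin.ext_iff, hn0.symm]) (fun j k h => Vmat_apply_eq_one_apply E ε η t ?_) ?_
  · simpa only [ne_eq, Fin.ext_iff, Fin.val_zero] using h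
  · rw [Vmat_submatrix E ε η hn0 hn]
    exact smul_mem_unitaryGroup_fin_two (star_gf_mul_gf E ε η t)
      (star_zf_mul_zf_add_star_wf_mul_wf E ε η hη t)

theorem stmt19 (E ε η : ℝ) (hη : 0 < η) (N n : ℕ) (hN : 1 ≤ N)
    (hn1 : 1 ≤ n) (hnN : n ≤ N) (t : ℝ) :
    (Vmat E ε η N n t).conjTranspose * Vmat E ε η N n t = 1 :=
  stmt19_general E ε η hη N n hn1 hnN t
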